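/- With conductances C^{n,p} from the discretization of k, and α₀ = sup_x ∫_{{k_s(x,·)≠0}} k_a(x,y)²/k_s(x,y) dy < ∞, the discrete quantities α₀ⁿ = sup_a Σ_{b : C^{n,p}_s(a,b)≠0} C^{n,p}_a(a,b)²/C^{n,p}_s(a,b) satisfy α₀ⁿ ≤ α₀ for every n; in particular limsup_n α₀ⁿ ≤ α₀. -/

import Mathlib

/-!
On a pair of cubes `ā × b̄`, the discrete conductances `C_s(a,b)` and `C_a(a,b)` are either both
zero or `n^d` times the integrals of `k_s` and `k_a` over `ā × b̄`, and `|k_a| ≤ k_s` because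
`k ≥ 0`. Cauchy–Schwarz bounds `C_a(a,b)² / C_s(a,b)` by `n^d ∫_{ā × b̄} k_a² / k_s`. Summing over
`b`, the disjoint cubes `b̄` give `∑_b C_a² / C_s ≤ n^d ∫_{ā} α₀ = α₀`, as `|ā| = n^{-d}`.
-/

open MeasureTheory Filter Topology
open scoped ENNReal NNReal Pointwise

noncomputable section

abbrev Eucl (d : ℕ) := EuclideanSpace ℝ (Fin d)

/-- The point of `ℝ^d` corresponding to the lattice point `a/n`, `a ∈ ℤ^d`. -/
def latticePt (d n : ℕ) (a : Fin d → ℤ) : Eucl d := WithLp.toLp 2 (fun i => (a i : ℝ) / n)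

/-- The half-open cube of side `1/n` centred at the lattice point `a/n`. -/
def cube (d n : ℕ) (a : Fin d → ℤ) : Set (Eucl d) :=
  {x | ∀ i, (a i : ℝ)/n - 1/(2*n) ≤ x i ∧ x i < (a i : ℝ)/n + 1/(2*n)}

/-- `[x]_n`: the index of the lattice point of `(1/n)ℤ^d` nearest to `x`. -/
def lattOf (d n : ℕ) (x : Eucl d) : Fin d → ℤ := fun i => ⌊n * x i + 1/2⌋

/-- The discretised conductances `C^{n,p}(a,b) = n^d ∫_{ā}∫_{b̄} k(x,y) dx dy` for
`|a−b| > 2√d/n^p` and `0` otherwise. -/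
def Cnp (d n : ℕ) (p : ℝ) (k : Eucl d → Eucl d → ℝ) (a b : Fin d → ℤ) : ℝ :=
  if ‖latticePt d n a - latticePt d n b‖ > 2 * Real.sqrt d / (n : ℝ) ^ p then
    (n : ℝ) ^ d * ∫ x in cube d n a, ∫ y in cube d n b, k x y
  else 0

/-- Symmetric part of the discretised conductances. -/
def CnpS (d n : ℕ) (p : ℝ) (k : Eucl d → Eucl d → ℝ) (a b : Fin d → ℤ) : ℝ :=
  (Cnp d n p k a b + Cnp d n p k b a) / 2

/-- Antisymmetric part of the discretised conductances. -/
def CnpA (d n : ℕ) (p : ℝ) (k : Eucl d → Eucl d → ℝ) (a b : Fin d → ℤ) : ℝ :=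
  (Cnp d n p k a b - Cnp d n p k b a) / 2

/-- The discrete non-symmetry quantity
`α₀ⁿ = sup_a ∑_{b : C^{n,p}_s(a,b) ≠ 0} C^{n,p}_a(a,b)² / C^{n,p}_s(a,b)`. -/
def alpha0n (d n : ℕ) (p : ℝ) (k : Eucl d → Eucl d → ℝ) : ℝ≥0∞ :=
  ⨆ a : Fin d → ℤ, ∑' b : Fin d → ℤ,
    ENNReal.ofReal
      (if CnpS d n p k a b ≠ 0 then (CnpA d n p k a b) ^ 2 / CnpS d n p k a b else 0)

/-- The non-symmetry quantity `α₀ = sup_x ∫_{k_s(x,·)≠0} k_a(x,y)²/k_s(x,y) dy`. -/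
def alpha0 (d : ℕ) (ks ka : Eucl d → Eucl d → ℝ) : ℝ≥0∞ :=
  ⨆ x : Eucl d, ∫⁻ y,
    ENNReal.ofReal (if ks x y ≠ 0 then (ka x y) ^ 2 / ks x y else 0)

open Function

lemma cube_eq_preimage_pi (d n : ℕ) (a : Fin d → ℤ) :
    cube d n a = (MeasurableEquiv.toLp 2 (Fin d → ℝ)).symm ⁻¹'
      Set.univ.pi fun i => Set.Ico ((a i : ℝ) / n - 1 / (2 * n)) ((a i : ℝ) / n + 1 / (2 * n)) := by
  ext x
  simp [cube, Set.mem_pi, MeasurableEquiv.coe_toLp_symm]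

lemma measurableSet_cube (d n : ℕ) (a : Fin d → ℤ) : MeasurableSet (cube d n a) := by
  rw [cube_eq_preimage_pi]
  exact (MeasurableEquiv.toLp 2 (Fin d → ℝ)).symm.measurable
    (MeasurableSet.univ_pi fun _ => measurableSet_Ico)

lemma volume_cube (d : ℕ) {n : ℕ} (hn : 0 < n) (a : Fin d → ℤ) :
    volume (cube d n a) = (n : ℝ≥0∞)⁻¹ ^ d := by
  have hside : ∀ c : ℝ, c + 1 / (2 * n) - (c - 1 / (2 * n)) = (n : ℝ)⁻¹ := fun c => by
    field_simp; ring
  rw [cube_eq_preimage_pi, (EuclideanSpace.volume_preserving_symm_measurableEquiv_toLp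
    (Fin d)).measure_preimage (MeasurableSet.univ_pi fun _ => measurableSet_Ico).nullMeasurableSet,
    volume_pi_pi]
  simp only [Real.volume_Ico, hside, ENNReal.ofReal_inv_of_pos (Nat.cast_pos.2 hn),
    ENNReal.ofReal_natCast, Finset.prod_const, Finset.card_univ, Fintype.card_fin]

lemma eq_lattOf_of_mem_cube {d n : ℕ} (hn : 0 < n) {a : Fin d → ℤ} {x : Eucl d}
    (hx : x ∈ cube d n a) : a = lattOf d n x := by
  have hn' : (0 : ℝ) < n := Nat.cast_pos.2 hn
  funext i
  obtain ⟨hlo, hhi⟩ := hx i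
  refine (Int.floor_eq_iff.2 ⟨?_, ?_⟩).symm
  · have := mul_le_mul_of_nonneg_left hlo hn'.le
    field_simp at this
    push_cast
    linarith
  · have := mul_lt_mul_of_pos_left hhi hn'
    field_simp at this
    push_cast
    linarith

lemma pairwise_disjoint_cube (d : ℕ) {n : ℕ} (hn : 0 < n) :
    Pairwise (Disjoint on cube d n) := fun _ _ hab =>
  Set.disjoint_left.2 fun _ hxa hxb =>
    hab ((eq_lattOf_of_mem_cube hn hxa).trans (eq_lattOf_of_mem_cube hn hxb).symm)

lemma two_mul_mul_sub_sq_mul_le_sq_div {g h : ℝ} (hg : 0 ≤ g) (hgh : g = 0 → h = 0) (t : ℝ) :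
    2 * t * h - t ^ 2 * g ≤ h ^ 2 / g := by
  rcases hg.eq_or_lt with rfl | hg
  · simp [hgh rfl]
  · have hsq : h ^ 2 / g - (2 * t * h - t ^ 2 * g) = (h - t * g) ^ 2 / g := by
      field_simp; ring
    linarith [div_nonneg (sq_nonneg (h - t * g)) hg.le]

/-- Proved by integrating `2th - t²g ≤ h²/g` at `t = ∫ h / ∫ g`. -/
lemma ofReal_sq_integral_div_integral_le_lintegral {α : Type*} [MeasurableSpace α]
    {π : Measure α} {g h : α → ℝ} (hg : Measurable g) (hh : Measurable h)
    (habs : ∀ z, |h z| ≤ g z) (hgi : Integrable g π) :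
    ENNReal.ofReal ((∫ z, h z ∂π) ^ 2 / ∫ z, g z ∂π) ≤ ∫⁻ z, ENNReal.ofReal (h z ^ 2 / g z) ∂π := by
  have hg0 : ∀ z, 0 ≤ g z := fun z => (abs_nonneg _).trans (habs z)
  have hgh : ∀ z, g z = 0 → h z = 0 := fun z hz => abs_nonpos_iff.1 (hz ▸ habs z)
  have hhi : Integrable h π :=
    hgi.mono' hh.aestronglyMeasurable (ae_of_all _ fun z => habs z)
  have hfi : Integrable (fun z => h z ^ 2 / g z) π := by
    refine hgi.mono' ((hh.pow_const 2).div hg).aestronglyMeasurable (ae_of_all _ fun z => ?_)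
    rw [Real.norm_of_nonneg (div_nonneg (sq_nonneg _) (hg0 z))]
    rcases (hg0 z).eq_or_lt with hz | hz
    · simp [← hz]
    · rw [div_le_iff₀ hz, ← sq, ← sq_abs]
      exact pow_le_pow_left₀ (abs_nonneg _) (habs z) 2
  set G := ∫ z, g z ∂π
  set H := ∫ z, h z ∂π
  have hG0 : 0 ≤ G := integral_nonneg hg0
  rcases hG0.eq_or_lt with hG | hG
  · rw [← hG, div_zero, ENNReal.ofReal_zero]
    exact zero_le
  rw [← ofReal_integral_eq_lintegral_ofReal hfi
    (ae_of_all _ fun z => div_nonneg (sq_nonneg _) (hg0 z))]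
  refine ENNReal.ofReal_le_ofReal ?_
  calc H ^ 2 / G = 2 * (H / G) * H - (H / G) ^ 2 * G := by field_simp; ring
    _ = ∫ z, 2 * (H / G) * h z - (H / G) ^ 2 * g z ∂π := by
      rw [integral_sub (hhi.const_mul _) (hgi.const_mul _), integral_const_mul, integral_const_mul]
    _ ≤ ∫ z, h z ^ 2 / g z ∂π :=
      integral_mono ((hhi.const_mul _).sub (hgi.const_mul _)) hfi fun z =>
        two_mul_mul_sub_sq_mul_le_sq_div (hg0 z) (hgh z) _

lemma integral_integral_eq_integral_prod_swap {α β : Type*} [MeasurableSpace α]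
    [MeasurableSpace β] {μ : Measure α} {ν : Measure β} [SFinite μ] [SFinite ν] {f : β → α → ℝ}
    (hf : Integrable (uncurry f) (ν.prod μ)) :
    ∫ x, ∫ y, f x y ∂μ ∂ν = ∫ z, f z.2 z.1 ∂μ.prod ν :=
  (integral_prod_symm _ hf.swap).symm

abbrev cubePairMeasure (d n : ℕ) (a b : Fin d → ℤ) : Measure (Eucl d × Eucl d) :=
  (volume.restrict (cube d n a)).prod (volume.restrict (cube d n b))

lemma cubePairMeasure_eq_restrict (d n : ℕ) (a b : Fin d → ℤ) :
    cubePairMeasure d n a b = volume.restrict (cube d n a ×ˢ cube d n b) := by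
  rw [cubePairMeasure, Measure.prod_restrict, Measure.volume_eq_prod]

section Conductances

variable {d n : ℕ} {p : ℝ} {k ks ka : Eucl d → Eucl d → ℝ} {a b : Fin d → ℤ}

lemma CnpS_eq_ite
    (hab : Integrable (uncurry k) (cubePairMeasure d n a b))
    (hba : Integrable (uncurry k) (cubePairMeasure d n b a))
    (hks : ∀ x y, ks x y = (k x y + k y x) / 2) :
    CnpS d n p k a b = if ‖latticePt d n a - latticePt d n b‖ > 2 * Real.sqrt d / (n : ℝ) ^ p then
      (n : ℝ) ^ d * ∫ z, uncurry ks z ∂cubePairMeasure d n a b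
      else 0 := by
  rw [CnpS, Cnp, Cnp, norm_sub_rev (latticePt d n b)]
  split_ifs
  · simp only [uncurry, hks]
    rw [integral_integral_eq_integral_prod_swap hba, integral_integral hab, integral_div,
      integral_add (f := fun z : Eucl d × Eucl d => k z.1 z.2) (g := fun z => k z.2 z.1) hab
        hba.swap]
    ring
  · simp

lemma CnpA_eq_ite
    (hab : Integrable (uncurry k) (cubePairMeasure d n a b))
    (hba : Integrable (uncurry k) (cubePairMeasure d n b a))
    (hka : ∀ x y, ka x y = (k x y - k y x) / 2) :
    CnpA d n p k a b = if ‖latticePt d n a - latticePt d n b‖ > 2 * Real.sqrt d / (n : ℝ) ^ p then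
      (n : ℝ) ^ d * ∫ z, uncurry ka z ∂cubePairMeasure d n a b
      else 0 := by
  rw [CnpA, Cnp, Cnp, norm_sub_rev (latticePt d n b)]
  split_ifs
  · simp only [uncurry, hka]
    rw [integral_integral_eq_integral_prod_swap hba, integral_integral hab, integral_div,
      integral_sub (f := fun z : Eucl d × Eucl d => k z.1 z.2) (g := fun z => k z.2 z.1) hab
        hba.swap]
    ring
  · simp

lemma measurable_uncurry_of_eq_add_swap (hkm : Measurable (uncurry k))
    (hks : ∀ x y, ks x y = (k x y + k y x) / 2) : Measurable (uncurry ks) := by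
  rw [show uncurry ks = fun z => (uncurry k z + uncurry k z.swap) / 2 from
    funext fun z => hks z.1 z.2]
  fun_prop

lemma measurable_uncurry_of_eq_sub_swap (hkm : Measurable (uncurry k))
    (hka : ∀ x y, ka x y = (k x y - k y x) / 2) : Measurable (uncurry ka) := by
  rw [show uncurry ka = fun z => (uncurry k z - uncurry k z.swap) / 2 from
    funext fun z => hka z.1 z.2]
  fun_prop

lemma ofReal_CnpA_sq_div_CnpS_le (hk0 : ∀ x y, 0 ≤ k x y) (hkm : Measurable (uncurry k))
    (hab : Integrable (uncurry k) (cubePairMeasure d n a b))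
    (hba : Integrable (uncurry k) (cubePairMeasure d n b a))
    (hks : ∀ x y, ks x y = (k x y + k y x) / 2) (hka : ∀ x y, ka x y = (k x y - k y x) / 2) :
    ENNReal.ofReal (CnpA d n p k a b ^ 2 / CnpS d n p k a b) ≤
      (n : ℝ≥0∞) ^ d *
        ∫⁻ x in cube d n a, ∫⁻ y in cube d n b, ENNReal.ofReal (ka x y ^ 2 / ks x y) := by
  have hks_m := measurable_uncurry_of_eq_add_swap hkm hks
  have hka_m := measurable_uncurry_of_eq_sub_swap hkm hka
  have habs : ∀ z, |uncurry ka z| ≤ uncurry ks z := fun z => by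
    simp only [uncurry, hks, hka, abs_le]
    constructor <;> linarith [hk0 z.1 z.2, hk0 z.2 z.1]
  have hint_ks : Integrable (uncurry ks) (cubePairMeasure d n a b) :=
    ((hab.add hba.swap).div_const 2).congr (ae_of_all _ fun z => (hks z.1 z.2).symm)
  rw [CnpS_eq_ite hab hba hks, CnpA_eq_ite hab hba hka]
  split_ifs
  · have hscale : ∀ c A S : ℝ, (c * A) ^ 2 / (c * S) = c * (A ^ 2 / S) := fun c A S => by
      rcases eq_or_ne c 0 with rfl | hc
      · simp
      · field_simp
    rw [hscale, ENNReal.ofReal_mul (by positivity), ENNReal.ofReal_pow (Nat.cast_nonneg n),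
      ENNReal.ofReal_natCast, lintegral_lintegral (by fun_prop)]
    gcongr
    exact ofReal_sq_integral_div_integral_le_lintegral hks_m hka_m habs hint_ks
  · simp

end Conductances

lemma pow_mul_tsum_lintegral_cube_le_iSup {d n : ℕ} (hn : 0 < n) {F : Eucl d → Eucl d → ℝ≥0∞}
    (hF : Measurable (uncurry F)) (a : Fin d → ℤ) :
    (n : ℝ≥0∞) ^ d * ∑' b, ∫⁻ x in cube d n a, ∫⁻ y in cube d n b, F x y ≤ ⨆ x, ∫⁻ y, F x y := by
  have hinner : ∀ x, ∑' b, ∫⁻ y in cube d n b, F x y ≤ ⨆ x, ∫⁻ y, F x y := fun x =>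
    calc ∑' b, ∫⁻ y in cube d n b, F x y = ∫⁻ y in ⋃ b, cube d n b, F x y :=
          (lintegral_iUnion (measurableSet_cube d n) (pairwise_disjoint_cube d hn) _).symm
      _ ≤ ∫⁻ y, F x y := setLIntegral_le_lintegral _ _
      _ ≤ ⨆ x, ∫⁻ y, F x y := le_iSup (fun x => ∫⁻ y, F x y) x
  calc (n : ℝ≥0∞) ^ d * ∑' b, ∫⁻ x in cube d n a, ∫⁻ y in cube d n b, F x y
      = (n : ℝ≥0∞) ^ d * ∫⁻ x in cube d n a, ∑' b, ∫⁻ y in cube d n b, F x y := by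
        congr 1
        exact (lintegral_tsum fun b =>
          (hF.lintegral_prod_right' (ν := volume.restrict (cube d n b))).aemeasurable).symm
    _ ≤ (n : ℝ≥0∞) ^ d * ∫⁻ _ in cube d n a, ⨆ x, ∫⁻ y, F x y := by
        gcongr with x
        exact hinner x
    _ = ⨆ x, ∫⁻ y, F x y := by
        rw [setLIntegral_const, volume_cube d hn, mul_left_comm, ← mul_pow,
          ENNReal.mul_inv_cancel (by exact_mod_cast hn.ne') (ENNReal.natCast_ne_top n), one_pow,
          mul_one]

lemma ite_ne_zero_div_eq_div (x y : ℝ) : (if y ≠ 0 then x / y else 0) = x / y := by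
  split_ifs with hy
  · rfl
  · rw [not_not.1 hy, div_zero]

theorem discrete_alpha_le_alpha_general (d : ℕ) (p : ℝ)
    (k : Eucl d → Eucl d → ℝ) (hk0 : ∀ x y, 0 ≤ k x y)
    (hkm : Measurable (Function.uncurry k))
    (hint : ∀ (n : ℕ) (a b : Fin d → ℤ),
      IntegrableOn (Function.uncurry k) (cube d n a ×ˢ cube d n b) volume)
    (ks ka : Eucl d → Eucl d → ℝ)
    (hks : ∀ x y, ks x y = (k x y + k y x) / 2)
    (hka : ∀ x y, ka x y = (k x y - k y x) / 2) :
    (∀ n : ℕ, 0 < n → alpha0n d n p k ≤ alpha0 d ks ka) ∧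
      limsup (fun n : ℕ => alpha0n d n p k) atTop ≤ alpha0 d ks ka := by
  have hint_prod : ∀ n a b, Integrable (uncurry k) (cubePairMeasure d n a b) := fun n a b =>
    cubePairMeasure_eq_restrict d n a b ▸ hint n a b
  have hks_m := measurable_uncurry_of_eq_add_swap hkm hks
  have hka_m := measurable_uncurry_of_eq_sub_swap hkm hka
  have hF : Measurable (uncurry fun x y => ENNReal.ofReal (ka x y ^ 2 / ks x y)) := by
    fun_prop
  have hbound : ∀ n : ℕ, 0 < n → alpha0n d n p k ≤ alpha0 d ks ka := fun n hn => by
    simp only [alpha0n, alpha0, ite_ne_zero_div_eq_div]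
    refine iSup_le fun a => ?_
    calc ∑' b, ENNReal.ofReal (CnpA d n p k a b ^ 2 / CnpS d n p k a b)
        ≤ ∑' b, (n : ℝ≥0∞) ^ d *
            ∫⁻ x in cube d n a, ∫⁻ y in cube d n b, ENNReal.ofReal (ka x y ^ 2 / ks x y) :=
          ENNReal.tsum_le_tsum fun b =>
            ofReal_CnpA_sq_div_CnpS_le hk0 hkm (hint_prod n a b) (hint_prod n b a) hks hka
      _ ≤ _ := by
          rw [ENNReal.tsum_mul_left]
          exact pow_mul_tsum_lintegral_cube_le_iSup hn hF a
  exact ⟨hbound, limsup_le_of_le (by isBoundedDefault)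
    (eventually_atTop.2 ⟨1, fun n hn => hbound n hn⟩)⟩

/-- For the discretised conductances of a kernel `k` with `α₀ < ∞`, one has
`α₀ⁿ ≤ α₀` for every `n`; in particular `limsup_n α₀ⁿ ≤ α₀`. -/
theorem discrete_alpha_le_alpha (d : ℕ) (p : ℝ) (hp : 0 < p) (hp1 : p ≤ 1)
    (k : Eucl d → Eucl d → ℝ) (hk0 : ∀ x y, 0 ≤ k x y)
    (hkm : Measurable (Function.uncurry k))
    (hint : ∀ (n : ℕ) (a b : Fin d → ℤ),
      IntegrableOn (Function.uncurry k) (cube d n a ×ˢ cube d n b) volume)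
    (ks ka : Eucl d → Eucl d → ℝ)
    (hks : ∀ x y, ks x y = (k x y + k y x) / 2)
    (hka : ∀ x y, ka x y = (k x y - k y x) / 2)
    (hα : alpha0 d ks ka < ∞) :
    (∀ n : ℕ, 0 < n → alpha0n d n p k ≤ alpha0 d ks ka) ∧
      limsup (fun n : ℕ => alpha0n d n p k) atTop ≤ alpha0 d ks ka :=
  discrete_alpha_le_alpha_general d p k hk0 hkm hint ks ka hks hka
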